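/- Let p_{k̂,e} ≥ 0 (k̂, e ∈ {1,…,K}) be a joint probability distribution of predicted class k̂ and observed class e with ∑_{k̂,e} p_{k̂,e} = 1, whose observation marginals p_e = ∑_{k̂=1}^K p_{k̂,e} are all positive, and let s be the Gerrity scoring matrix built from these marginals. For r = 1,…,K−1, let A_r = ∑_{k̂≤r, e≤r} p_{k̂,e}, B_r = ∑_{k̂>r, e≤r} p_{k̂,e}, C_r = ∑_{k̂≤r, e>r} p_{k̂,e}, D_r = ∑_{k̂>r, e>r} p_{k̂,e}, and define the Peirce Skill Score of the 2×2 contingency table obtained by thresholding at r as PSS(r) = (A_r D_r − C_r B_r) / ((A_r + B_r)(C_r + D_r)); its denominator equals P_r (1 − P_r) > 0. Then the Equitable Skill Score is the average of the K−1 Peirce Skill Scores: ESS = ∑_{k̂=1}^K ∑_{e=1}^K p_{k̂,e} s_{k̂,e} = (1/(K−1)) ∑_{r=1}^{K−1} PSS(r). -/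

import Mathlib

/-- `Pcum K p r` is the cumulative probability `P_r = ∑_{e=1}^r p_e` of the
first `r` classes (classes are `0`-indexed by `Fin K`, so this sums `p e` over
`e` with `(e : ℕ) < r`). -/
noncomputable def Pcum (K : ℕ) (p : Fin K → ℝ) (r : ℕ) : ℝ :=
  ∑ e ∈ Finset.univ.filter (fun e : Fin K => (e : ℕ) < r), p e

/-- `aG K p r = (1 - P_r) / P_r`. -/
noncomputable def aG (K : ℕ) (p : Fin K → ℝ) (r : ℕ) : ℝ :=
  (1 - Pcum K p r) / Pcum K p r

/-- The Gerrity scoring matrix: for `1`-indexed classes `k̂ ≤ e`,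
`s_{k̂,e} = s_{e,k̂} = (1/(K-1)) (∑_{r=1}^{k̂-1} a_r⁻¹ - (e - k̂) + ∑_{r=e}^{K-1} a_r)`.
Here `j k : Fin K` are the `0`-indexed classes (`j = k̂ - 1`, `k = e - 1`), and
the formula is symmetrized via `min`/`max`. -/
noncomputable def gerrity (K : ℕ) (p : Fin K → ℝ) (j k : Fin K) : ℝ :=
  (1 / ((K : ℝ) - 1)) *
    ((∑ r ∈ Finset.Icc 1 (min (j : ℕ) (k : ℕ)), (aG K p r)⁻¹)
      - (((max (j : ℕ) (k : ℕ) : ℕ) : ℝ) - ((min (j : ℕ) (k : ℕ) : ℕ) : ℝ))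
      + ∑ r ∈ Finset.Icc (max (j : ℕ) (k : ℕ) + 1) (K - 1), aG K p r)

/-- `A_r`: joint probability that both the predicted and observed classes are
among the first `r` classes. -/
noncomputable def tableA (K : ℕ) (pj : Fin K → Fin K → ℝ) (r : ℕ) : ℝ :=
  ∑ khat ∈ Finset.univ.filter (fun khat : Fin K => (khat : ℕ) < r),
    ∑ e ∈ Finset.univ.filter (fun e : Fin K => (e : ℕ) < r), pj khat e

/-- `B_r`: joint probability that the predicted class is above the threshold
`r` while the observed class is among the first `r` classes. -/
noncomputable def tableB (K : ℕ) (pj : Fin K → Fin K → ℝ) (r : ℕ) : ℝ :=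
  ∑ khat ∈ Finset.univ.filter (fun khat : Fin K => r ≤ (khat : ℕ)),
    ∑ e ∈ Finset.univ.filter (fun e : Fin K => (e : ℕ) < r), pj khat e

/-- `C_r`: joint probability that the predicted class is among the first `r`
classes while the observed class is above the threshold `r`. -/
noncomputable def tableC (K : ℕ) (pj : Fin K → Fin K → ℝ) (r : ℕ) : ℝ :=
  ∑ khat ∈ Finset.univ.filter (fun khat : Fin K => (khat : ℕ) < r),
    ∑ e ∈ Finset.univ.filter (fun e : Fin K => r ≤ (e : ℕ)), pj khat e

/-- `D_r`: joint probability that both the predicted and observed classes are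
above the threshold `r`. -/
noncomputable def tableD (K : ℕ) (pj : Fin K → Fin K → ℝ) (r : ℕ) : ℝ :=
  ∑ khat ∈ Finset.univ.filter (fun khat : Fin K => r ≤ (khat : ℕ)),
    ∑ e ∈ Finset.univ.filter (fun e : Fin K => r ≤ (e : ℕ)), pj khat e

/-- The Peirce Skill Score of the `2 × 2` contingency table obtained by
thresholding the joint distribution at `r`:
`PSS(r) = (A_r D_r - C_r B_r) / ((A_r + B_r)(C_r + D_r))`. -/
noncomputable def peirceScore (K : ℕ) (pj : Fin K → Fin K → ℝ) (r : ℕ) : ℝ :=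
  (tableA K pj r * tableD K pj r - tableC K pj r * tableB K pj r) /
    ((tableA K pj r + tableB K pj r) * (tableC K pj r + tableD K pj r))

/-!
Thresholding at `r` turns the `K`-category problem into a `2 × 2` one, whose equitable
(Gandin–Murphy) scoring matrix is `[[a_r, -1], [-1, a_r⁻¹]]`. The Gerrity matrix is the average
of these `K - 1` matrices over `r`, so by linearity the ESS is the average of the expected
`2 × 2` scores `a_r A_r - B_r - C_r + a_r⁻¹ D_r`. Since `a_r = (C_r + D_r) / (A_r + B_r)` and
`A_r + B_r + C_r + D_r = 1`, each of these is the Peirce score `PSS(r)`.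
-/

open Finset

noncomputable def thresholdScore (a : ℝ) (r j k : ℕ) : ℝ :=
  if j < r ∧ k < r then a else if j < r ∨ k < r then -1 else a⁻¹

theorem sum_Icc_thresholdScore (a : ℕ → ℝ) {n j k : ℕ} (hj : j ≤ n) (hk : k ≤ n) :
    ∑ r ∈ Icc 1 n, thresholdScore (a r) r j k
      = ∑ r ∈ Icc 1 (min j k), (a r)⁻¹ - (((max j k : ℕ) : ℝ) - ((min j k : ℕ) : ℝ))
        + ∑ r ∈ Icc (max j k + 1) n, a r := by
  set m := min j k
  set M := max j k
  have hmM : m ≤ M := min_le_max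
  have hMn : M ≤ n := max_le hj hk
  have below : ∀ r ∈ Ioc 0 m, thresholdScore (a r) r j k = (a r)⁻¹ := fun r hr => by
    obtain ⟨-, hrm⟩ := mem_Ioc.1 hr
    rw [thresholdScore, if_neg (by omega), if_neg (by omega)]
  have between : ∀ r ∈ Ioc m M, thresholdScore (a r) r j k = -1 := fun r hr => by
    obtain ⟨hmr, hrM⟩ := mem_Ioc.1 hr
    rw [thresholdScore, if_neg (by omega), if_pos (by omega)]
  have above : ∀ r ∈ Ioc M n, thresholdScore (a r) r j k = a r := fun r hr => by
    obtain ⟨hMr, -⟩ := mem_Ioc.1 hr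
    rw [thresholdScore, if_pos (by omega)]
  have Icc_one : ∀ b : ℕ, Icc 1 b = Ioc 0 b := Icc_add_one_left_eq_Ioc 0
  rw [Icc_one, Icc_one, Icc_add_one_left_eq_Ioc,
    ← sum_Ioc_consecutive _ (Nat.zero_le M) hMn, ← sum_Ioc_consecutive _ (Nat.zero_le m) hmM,
    sum_congr rfl below, sum_congr rfl between, sum_congr rfl above, sum_const, Nat.card_Ioc,
    nsmul_eq_mul, Nat.cast_sub hmM]
  ring

theorem gerrity_eq_average_thresholdScore (K : ℕ) (p : Fin K → ℝ) (j k : Fin K) :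
    gerrity K p j k
      = 1 / ((K : ℝ) - 1) * ∑ r ∈ Icc 1 (K - 1), thresholdScore (aG K p r) r j k := by
  rw [gerrity, sum_Icc_thresholdScore _ (Nat.le_sub_one_of_lt j.isLt) (Nat.le_sub_one_of_lt k.isLt)]

theorem sum_mul_gerrity_eq_average (K : ℕ) (pj : Fin K → Fin K → ℝ) (p : Fin K → ℝ) :
    ∑ j : Fin K, ∑ k : Fin K, pj j k * gerrity K p j k
      = 1 / ((K : ℝ) - 1) * ∑ r ∈ Icc 1 (K - 1),
          ∑ j : Fin K, ∑ k : Fin K, pj j k * thresholdScore (aG K p r) r j k := by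
  simp only [gerrity_eq_average_thresholdScore, mul_sum, mul_left_comm (pj _ _)]
  exact (sum_congr rfl fun _ _ => sum_comm).trans sum_comm

theorem sum_filter_lt_add_sum_filter_le {M : Type*} [AddCommMonoid M] {K : ℕ} (r : ℕ)
    (f : Fin K → M) :
    ∑ x ∈ univ.filter (fun x : Fin K => (x : ℕ) < r), f x
      + ∑ x ∈ univ.filter (fun x : Fin K => r ≤ (x : ℕ)), f x = ∑ x, f x := by
  simpa only [not_lt] using sum_filter_add_sum_filter_not univ (fun x : Fin K => (x : ℕ) < r) f

theorem sum_mul_thresholdScore (K : ℕ) (pj : Fin K → Fin K → ℝ) (a : ℝ) (r : ℕ) :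
    ∑ j : Fin K, ∑ k : Fin K, pj j k * thresholdScore a r j k
      = a * tableA K pj r - tableC K pj r - tableB K pj r + a⁻¹ * tableD K pj r := by
  simp only [tableA, tableB, tableC, tableD, sum_filter, ite_sum_zero, mul_sum,
    ← sum_sub_distrib, ← sum_add_distrib]
  refine sum_congr rfl fun j _ => sum_congr rfl fun k _ => ?_
  unfold thresholdScore
  split_ifs <;> first | omega | ring

theorem tableA_add_tableB (K : ℕ) (pj : Fin K → Fin K → ℝ) (r : ℕ) :
    tableA K pj r + tableB K pj r = Pcum K (fun e => ∑ khat : Fin K, pj khat e) r := by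
  rw [tableA, tableB, sum_filter_lt_add_sum_filter_le, Pcum, sum_comm]

theorem tableC_add_tableD (K : ℕ) (pj : Fin K → Fin K → ℝ) (r : ℕ) :
    tableC K pj r + tableD K pj r
      = ∑ khat : Fin K, ∑ e : Fin K, pj khat e - Pcum K (fun e => ∑ khat : Fin K, pj khat e) r := by
  rw [tableC, tableD, sum_filter_lt_add_sum_filter_le, Pcum, sum_comm (s := univ.filter _),
    eq_sub_iff_add_eq', ← sum_add_distrib]
  exact sum_congr rfl fun _ _ => sum_filter_lt_add_sum_filter_le r _

theorem gandinMurphy_eq_peirce {𝕜 : Type*} [Field 𝕜] {A B C D : 𝕜} (hAB : A + B ≠ 0)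
    (hCD : C + D ≠ 0) (hs : A + B + C + D = 1) :
    (C + D) / (A + B) * A - C - B + ((C + D) / (A + B))⁻¹ * D
      = (A * D - C * B) / ((A + B) * (C + D)) := by
  field_simp
  linear_combination (A * (A + B + C + D) - (2 * A + B + C) * (A + B) + (A + B) ^ 2) * hs

theorem Pcum_pos {K : ℕ} {p : Fin K → ℝ} (hp : ∀ e, 0 < p e) {r : ℕ} (hr : 0 < r) (hK : 0 < K) :
    0 < Pcum K p r :=
  sum_pos (fun e _ => hp e) ⟨⟨0, hK⟩, by simpa using hr⟩

theorem Pcum_lt_sum {K : ℕ} {p : Fin K → ℝ} (hp : ∀ e, 0 < p e) {r : ℕ} (hr : r < K) :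
    Pcum K p r < ∑ e, p e :=
  (lt_add_of_pos_right _ (sum_pos (fun e _ => hp e) ⟨⟨r, hr⟩, by simp⟩)).trans_eq
    (sum_filter_lt_add_sum_filter_le r p)

theorem sum_mul_thresholdScore_aG_eq_peirceScore (K : ℕ) (pj : Fin K → Fin K → ℝ) (r : ℕ)
    (hsum : ∑ khat : Fin K, ∑ e : Fin K, pj khat e = 1)
    (hP0 : Pcum K (fun e => ∑ khat : Fin K, pj khat e) r ≠ 0)
    (hP1 : Pcum K (fun e => ∑ khat : Fin K, pj khat e) r ≠ 1) :
    ∑ j : Fin K, ∑ k : Fin K,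
        pj j k * thresholdScore (aG K (fun e => ∑ khat : Fin K, pj khat e) r) r j k
      = peirceScore K pj r := by
  have hAB := tableA_add_tableB K pj r
  have hCD := tableC_add_tableD K pj r
  rw [hsum] at hCD
  rw [sum_mul_thresholdScore, aG, ← hCD, ← hAB, peirceScore, gandinMurphy_eq_peirce]
  · exact hAB ▸ hP0
  · exact hCD ▸ sub_ne_zero.2 hP1.symm
  · linear_combination hAB + hCD

theorem ess_eq_average_of_peirce_general
    (K : ℕ) (pj : Fin K → Fin K → ℝ)
    (hpjsum : ∑ khat : Fin K, ∑ e : Fin K, pj khat e = 1)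
    (hmarg : ∀ e : Fin K, 0 < ∑ khat : Fin K, pj khat e) :
    (∀ r ∈ Finset.Icc 1 (K - 1),
      (tableA K pj r + tableB K pj r) * (tableC K pj r + tableD K pj r)
          = Pcum K (fun e => ∑ khat : Fin K, pj khat e) r *
              (1 - Pcum K (fun e => ∑ khat : Fin K, pj khat e) r) ∧
        0 < (tableA K pj r + tableB K pj r) * (tableC K pj r + tableD K pj r)) ∧
    ∑ khat : Fin K, ∑ e : Fin K,
        pj khat e * gerrity K (fun e => ∑ khat : Fin K, pj khat e) khat e
      = (1 / ((K : ℝ) - 1)) * ∑ r ∈ Finset.Icc 1 (K - 1), peirceScore K pj r := by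
  have hP : ∀ r ∈ Icc 1 (K - 1), 0 < Pcum K (fun e => ∑ khat : Fin K, pj khat e) r
      ∧ Pcum K (fun e => ∑ khat : Fin K, pj khat e) r < 1 := fun r hr => by
    obtain ⟨hr1, hrK⟩ := mem_Icc.1 hr
    refine ⟨Pcum_pos hmarg hr1 (by omega), ?_⟩
    have hlt := Pcum_lt_sum hmarg (r := r) (by omega)
    rwa [sum_comm, hpjsum] at hlt
  have hden : ∀ r, (tableA K pj r + tableB K pj r) * (tableC K pj r + tableD K pj r)
      = Pcum K (fun e => ∑ khat : Fin K, pj khat e) r *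
          (1 - Pcum K (fun e => ∑ khat : Fin K, pj khat e) r) := fun r => by
    rw [tableA_add_tableB, tableC_add_tableD, hpjsum]
  refine ⟨fun r hr => ⟨hden r, hden r ▸ mul_pos (hP r hr).1 (sub_pos.2 (hP r hr).2)⟩, ?_⟩
  rw [sum_mul_gerrity_eq_average]
  congr 1
  exact sum_congr rfl fun r hr =>
    sum_mul_thresholdScore_aG_eq_peirceScore K pj r hpjsum (hP r hr).1.ne' (hP r hr).2.ne

/-- The Equitable Skill Score equals the average of the `K - 1` Peirce Skill
Scores obtained by thresholding the contingency table; moreover the denominator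
of `PSS(r)` equals `P_r (1 - P_r) > 0`, where `P_r` is the cumulative
observation marginal. -/
theorem ess_eq_average_of_peirce
    (K : ℕ) (hK : 2 ≤ K) (pj : Fin K → Fin K → ℝ)
    (hpj : ∀ khat e, 0 ≤ pj khat e)
    (hpjsum : ∑ khat : Fin K, ∑ e : Fin K, pj khat e = 1)
    (hmarg : ∀ e : Fin K, 0 < ∑ khat : Fin K, pj khat e) :
    (∀ r ∈ Finset.Icc 1 (K - 1),
      (tableA K pj r + tableB K pj r) * (tableC K pj r + tableD K pj r)
          = Pcum K (fun e => ∑ khat : Fin K, pj khat e) r *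
              (1 - Pcum K (fun e => ∑ khat : Fin K, pj khat e) r) ∧
        0 < (tableA K pj r + tableB K pj r) * (tableC K pj r + tableD K pj r)) ∧
    ∑ khat : Fin K, ∑ e : Fin K,
        pj khat e * gerrity K (fun e => ∑ khat : Fin K, pj khat e) khat e
      = (1 / ((K : ℝ) - 1)) * ∑ r ∈ Finset.Icc 1 (K - 1), peirceScore K pj r :=
  ess_eq_average_of_peirce_general K pj hpjsum hmarg
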